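/- Let $F_1,\ldots,F_S > 0$, $\overline{U}_1,\ldots,\overline{U}_S \in \mathbb{R}$, $h_0 \in \mathbb{R}$, and fix $1 \le s_0 \le S$. Consider minimizing $\sum_{s=1}^S F_s(\overline{U}_s - h_s)^2$ over vectors satisfying $h_1 \le \cdots \le h_{s_0} \le h_0 \le h_{s_0+1} \le \cdots \le h_S$. Then the constrained problem decouples: the minimizer restricted to indices $s \le s_0$ equals the componentwise minimum of $h_0$ and the unconstrained isotonic regression of $(\overline{U}_1, \ldots, \overline{U}_{s_0})$ with weights $(F_1,\ldots,F_{s_0})$, and the minimizer restricted to indices $s > s_0$ equals the componentwise maximum of $h_0$ and the unconstrained isotonic regression of $(\overline{U}_{s_0+1}, \ldots, \overline{U}_S)$ with weights $(F_{s_0+1},\ldots,F_S)$. -/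

import Mathlib

/-! Perturbation argument. Lowering the minimizer `g` by `ε` on a block `[j, k]` that starts at
a jump of `g` (and stays above `h0` to the right of `s0`) keeps it feasible for small `ε > 0`, so
the weighted residual `∑ F (U - g)` over the block is nonnegative; raising `g` on a block that
ends at a jump gives the opposite sign. For blocks starting (ending) at the level set of `g s`
this bounds the block averages of `U` from below (above) by `g s`, and the max-min formula is
pinned to `g s` except when `g s` sits at `h0`, where the constraint is active. -/

open Finset Filter Topology

variable {ι : Type*}

def weightedSqError [Fintype ι] (F U h : ι → ℝ) : ℝ := ∑ i, F i * (U i - h i) ^ 2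

def pinnedMonotone [Preorder ι] (s0 : ι) (h0 : ℝ) : Set (ι → ℝ) :=
  {h | Monotone h ∧ (∀ i ≤ s0, h i ≤ h0) ∧ ∀ i, s0 < i → h0 ≤ h i}

noncomputable def blockAvg [Preorder ι] [LocallyFiniteOrder ι] (F U : ι → ℝ) (a b : ι) : ℝ :=
  (∑ i ∈ Icc a b, F i * U i) / ∑ i ∈ Icc a b, F i

theorem Monotone.exists_start_levelSet {α β : Type*} [LinearOrder α] [WellFoundedLT α]
    [PartialOrder β] {g : α → β} (hg : Monotone g) (s : α) :
    ∃ a ≤ s, g a = g s ∧ ∀ i < a, g i < g a := by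
  obtain ⟨a, ha, hmin⟩ := wellFounded_lt.has_min {a | g a = g s} ⟨s, rfl⟩
  refine ⟨a, not_lt.1 (hmin s rfl), ha, fun i hi => (hg hi.le).lt_of_ne fun h => ?_⟩
  exact hmin i (h.trans ha) hi

theorem Monotone.exists_end_levelSet {α β : Type*} [LinearOrder α] [WellFoundedGT α]
    [PartialOrder β] {g : α → β} (hg : Monotone g) (s : α) :
    ∃ b, s ≤ b ∧ g b = g s ∧ ∀ i, b < i → g b < g i :=
  hg.dual.exists_start_levelSet (α := αᵒᵈ) s

theorem eventually_add_mul_le_add_mul {a b x y : ℝ} (hab : a ≤ b) (h : y < x → a < b) :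
    ∀ᶠ ε in 𝓝[>] (0 : ℝ), a + ε * x ≤ b + ε * y := by
  rcases le_or_gt x y with hxy | hyx
  · filter_upwards [self_mem_nhdsWithin] with ε (hε : 0 < ε)
    nlinarith
  · have hlim : Tendsto (fun ε : ℝ => b + ε * y - (a + ε * x)) (𝓝[>] 0) (𝓝 (b - a)) := by
      refine Tendsto.mono_left ?_ nhdsWithin_le_nhds
      exact Continuous.tendsto' (by fun_prop) _ _ (by simp)
    filter_upwards [hlim.eventually (lt_mem_nhds (sub_pos.2 (h hyx)))] with ε hε
    linarith

theorem sum_mul_residual_mul_nonpos_of_isMinOn [Fintype ι] {F U g d : ι → ℝ}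
    {K : Set (ι → ℝ)} (hmin : IsMinOn (weightedSqError F U) K g)
    (hK : ∀ᶠ ε in 𝓝[>] (0 : ℝ), g + ε • d ∈ K) :
    ∑ i, F i * (U i - g i) * d i ≤ 0 := by
  set c := ∑ i, F i * (U i - g i) * d i
  set D := ∑ i, F i * d i ^ 2
  have hexpand : ∀ ε : ℝ, weightedSqError F U (g + ε • d)
      = weightedSqError F U g + ε * (-2 * c + ε * D) := by
    intro ε
    simp only [weightedSqError, c, D, mul_sum, ← sum_add_distrib]
    refine sum_congr rfl fun i _ => ?_
    simp only [Pi.add_apply, Pi.smul_apply, smul_eq_mul]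
    ring
  have hev : ∀ᶠ ε in 𝓝[>] (0 : ℝ), 0 ≤ -2 * c + ε * D := by
    filter_upwards [hK, self_mem_nhdsWithin] with ε hε (hεpos : 0 < ε)
    have := isMinOn_iff.1 hmin _ hε
    rw [hexpand] at this
    exact nonneg_of_mul_nonneg_right (by linarith) hεpos
  have hlim : Tendsto (fun ε : ℝ => -2 * c + ε * D) (𝓝[>] 0) (𝓝 (-2 * c)) := by
    refine Tendsto.mono_left ?_ nhdsWithin_le_nhds
    exact Continuous.tendsto' (by fun_prop) _ _ (by simp)
  linarith [ge_of_tendsto hlim hev]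

theorem eventually_add_smul_mem_pinnedMonotone [Preorder ι] [Finite ι] {s0 : ι} {h0 : ℝ}
    {g d : ι → ℝ} (hg : g ∈ pinnedMonotone s0 h0)
    (hmono : ∀ i j, i ≤ j → d j < d i → g i < g j)
    (hle : ∀ i ≤ s0, 0 < d i → g i < h0)
    (hge : ∀ i, s0 < i → d i < 0 → h0 < g i) :
    ∀ᶠ ε in 𝓝[>] (0 : ℝ), g + ε • d ∈ pinnedMonotone s0 h0 := by
  obtain ⟨hg_mono, hg_le, hg_ge⟩ := hg
  have h_mono : ∀ᶠ ε in 𝓝[>] (0 : ℝ), ∀ i j, i ≤ j → g i + ε * d i ≤ g j + ε * d j := by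
    simp only [eventually_all]
    exact fun i j hij => eventually_add_mul_le_add_mul (hg_mono hij) (hmono i j hij)
  have h_le : ∀ᶠ ε in 𝓝[>] (0 : ℝ), ∀ i ≤ s0, g i + ε * d i ≤ h0 + ε * 0 := by
    simp only [eventually_all]
    exact fun i hi => eventually_add_mul_le_add_mul (hg_le i hi) (hle i hi)
  have h_ge : ∀ᶠ ε in 𝓝[>] (0 : ℝ), ∀ i, s0 < i → h0 + ε * 0 ≤ g i + ε * d i := by
    simp only [eventually_all]
    exact fun i hi => eventually_add_mul_le_add_mul (hg_ge i hi) (hge i hi)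
  filter_upwards [h_mono, h_le, h_ge] with ε h1 h2 h3
  simp only [mul_zero, add_zero] at h2 h3
  exact ⟨fun i j hij => h1 i j hij, h2, h3⟩

section BlockAvg

variable [LinearOrder ι] [LocallyFiniteOrder ι] {F U g : ι → ℝ}

theorem le_blockAvg_of_residual_nonneg (hF : ∀ i, 0 < F i) {a b : ι} (hab : a ≤ b) {t : ℝ}
    (hg : ∀ i ∈ Icc a b, t ≤ g i) (hres : 0 ≤ ∑ i ∈ Icc a b, F i * (U i - g i)) :
    t ≤ blockAvg F U a b := by
  rw [blockAvg, le_div_iff₀ (sum_pos (fun i _ => hF i) (nonempty_Icc.2 hab)), mul_sum]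
  calc ∑ i ∈ Icc a b, t * F i ≤ ∑ i ∈ Icc a b, F i * g i :=
        sum_le_sum fun i hi => by nlinarith [hg i hi, hF i]
    _ ≤ ∑ i ∈ Icc a b, F i * U i := by
        simpa only [mul_sub, sum_sub_distrib, sub_nonneg] using hres

theorem blockAvg_le_of_residual_nonpos (hF : ∀ i, 0 < F i) {a b : ι} (hab : a ≤ b) {t : ℝ}
    (hg : ∀ i ∈ Icc a b, g i ≤ t) (hres : ∑ i ∈ Icc a b, F i * (U i - g i) ≤ 0) :
    blockAvg F U a b ≤ t := by
  rw [blockAvg, div_le_iff₀ (sum_pos (fun i _ => hF i) (nonempty_Icc.2 hab)), mul_sum]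
  calc ∑ i ∈ Icc a b, F i * U i ≤ ∑ i ∈ Icc a b, F i * g i := by
        simpa only [mul_sub, sum_sub_distrib, sub_nonpos] using hres
    _ ≤ ∑ i ∈ Icc a b, t * F i := sum_le_sum fun i hi => by nlinarith [hg i hi, hF i]

end BlockAvg

section Blocks

variable [LinearOrder ι] [Fintype ι] [LocallyFiniteOrder ι] {F U g : ι → ℝ} {s0 : ι} {h0 : ℝ}

theorem sum_Icc_residual_nonneg (hmin : IsMinOn (weightedSqError F U) (pinnedMonotone s0 h0) g)
    (hg : g ∈ pinnedMonotone s0 h0) {j k : ι} (hjump : ∀ i < j, g i < g j)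
    (hcap : ∀ i ∈ Icc j k, s0 < i → h0 < g i) :
    0 ≤ ∑ i ∈ Icc j k, F i * (U i - g i) := by
  have := sum_mul_residual_mul_nonpos_of_isMinOn (d := fun i => -if i ∈ Icc j k then 1 else 0)
    hmin <| eventually_add_smul_mem_pinnedMonotone hg ?_ ?_ ?_
  · simpa only [mul_neg, mul_ite, mul_one, mul_zero, sum_neg_distrib, sum_ite_mem, univ_inter,
      Left.neg_nonpos_iff] using this
  · intro i i' hii' hd
    split_ifs at hd with hi' hi <;> norm_num at hd
    have hij : i < j := lt_of_not_ge fun h => hi (mem_Icc.2 ⟨h, hii'.trans (mem_Icc.1 hi').2⟩)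
    exact (hjump i hij).trans_le (hg.1 (mem_Icc.1 hi').1)
  · intro i _ hd
    split_ifs at hd <;> norm_num at hd
  · intro i hi hd
    exact hcap i (by by_contra h; simp only [h, if_false] at hd; norm_num at hd) hi

theorem sum_Icc_residual_nonpos (hmin : IsMinOn (weightedSqError F U) (pinnedMonotone s0 h0) g)
    (hg : g ∈ pinnedMonotone s0 h0) {j k : ι} (hjump : ∀ i, k < i → g k < g i)
    (hcap : ∀ i ∈ Icc j k, i ≤ s0 → g i < h0) :
    ∑ i ∈ Icc j k, F i * (U i - g i) ≤ 0 := by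
  have := sum_mul_residual_mul_nonpos_of_isMinOn (d := fun i => if i ∈ Icc j k then 1 else 0)
    hmin <| eventually_add_smul_mem_pinnedMonotone hg ?_ ?_ ?_
  · simpa only [mul_ite, mul_one, mul_zero, sum_ite_mem, univ_inter] using this
  · intro i i' hii' hd
    split_ifs at hd with hi' hi hi <;> norm_num at hd
    have hki' : k < i' := lt_of_not_ge fun h => hi' (mem_Icc.2 ⟨(mem_Icc.1 hi).1.trans hii', h⟩)
    exact (hg.1 (mem_Icc.1 hi).2).trans_lt (hjump i' hki')
  · intro i hi hd
    exact hcap i (by by_contra h; simp only [h, if_false] at hd; norm_num at hd) hi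
  · intro i _ hd
    split_ifs at hd <;> norm_num at hd

theorem apply_eq_min_sup'_inf'_blockAvg [LocallyFiniteOrderBot ι] (hF : ∀ i, 0 < F i)
    (hmin : IsMinOn (weightedSqError F U) (pinnedMonotone s0 h0) g)
    (hg : g ∈ pinnedMonotone s0 h0) (s : ι) (hs : s ≤ s0) :
    g s = min h0 ((Iic s).sup' ⟨s, mem_Iic.2 le_rfl⟩ fun a =>
      (Icc s s0).inf' ⟨s, mem_Icc.2 ⟨le_rfl, hs⟩⟩ fun b => blockAvg F U a b) := by
  have h_ge : g s ≤ (Iic s).sup' ⟨s, mem_Iic.2 le_rfl⟩ fun a =>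
      (Icc s s0).inf' ⟨s, mem_Icc.2 ⟨le_rfl, hs⟩⟩ fun b => blockAvg F U a b := by
    obtain ⟨a, has, hga, hjump⟩ := hg.1.exists_start_levelSet s
    refine le_sup'_of_le _ (mem_Iic.2 has) (le_inf' _ _ fun b hb => ?_)
    have hb' := mem_Icc.1 hb
    refine le_blockAvg_of_residual_nonneg hF (has.trans hb'.1)
      (fun i hi => hga ▸ hg.1 (mem_Icc.1 hi).1) (sum_Icc_residual_nonneg hmin hg hjump ?_)
    exact fun i hi hi' => absurd ((mem_Icc.1 hi).2.trans hb'.2) hi'.not_ge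
  rcases (hg.2.1 s hs).lt_or_eq with hlt | heq
  · obtain ⟨b, hsb, hgb, hjump⟩ := hg.1.exists_end_levelSet s
    have hbs0 : b ≤ s0 := not_lt.1 fun h => (hg.2.2 b h).not_gt (hgb ▸ hlt)
    have h_le : ((Iic s).sup' ⟨s, mem_Iic.2 le_rfl⟩ fun a =>
        (Icc s s0).inf' ⟨s, mem_Icc.2 ⟨le_rfl, hs⟩⟩ fun b => blockAvg F U a b) ≤ g s := by
      refine sup'_le _ _ fun a ha => (inf'_le _ (mem_Icc.2 ⟨hsb, hbs0⟩)).trans ?_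
      refine blockAvg_le_of_residual_nonpos hF ((mem_Iic.1 ha).trans hsb)
        (fun i hi => hgb ▸ hg.1 (mem_Icc.1 hi).2) (sum_Icc_residual_nonpos hmin hg hjump ?_)
      exact fun i hi _ => (hg.1 (mem_Icc.1 hi).2).trans_lt (hgb ▸ hlt)
    rw [min_eq_right (h_le.trans hlt.le)]
    exact le_antisymm h_ge h_le
  · rw [← heq, min_eq_left h_ge]

theorem apply_eq_max_sup'_inf'_blockAvg [LocallyFiniteOrderTop ι] (hF : ∀ i, 0 < F i)
    (hmin : IsMinOn (weightedSqError F U) (pinnedMonotone s0 h0) g)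
    (hg : g ∈ pinnedMonotone s0 h0) (s : ι) (hs : s0 < s) :
    g s = max h0 ((Ioc s0 s).sup' ⟨s, mem_Ioc.2 ⟨hs, le_rfl⟩⟩ fun a =>
      (Ici s).inf' ⟨s, mem_Ici.2 le_rfl⟩ fun b => blockAvg F U a b) := by
  have h_le : ((Ioc s0 s).sup' ⟨s, mem_Ioc.2 ⟨hs, le_rfl⟩⟩ fun a =>
      (Ici s).inf' ⟨s, mem_Ici.2 le_rfl⟩ fun b => blockAvg F U a b) ≤ g s := by
    obtain ⟨b, hsb, hgb, hjump⟩ := hg.1.exists_end_levelSet s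
    refine sup'_le _ _ fun a ha => (inf'_le _ (mem_Ici.2 hsb)).trans ?_
    have ha' := mem_Ioc.1 ha
    refine blockAvg_le_of_residual_nonpos hF (ha'.2.trans hsb)
      (fun i hi => hgb ▸ hg.1 (mem_Icc.1 hi).2) (sum_Icc_residual_nonpos hmin hg hjump ?_)
    exact fun i hi hi' => absurd (ha'.1.trans_le (mem_Icc.1 hi).1) hi'.not_gt
  rcases (hg.2.2 s hs).lt_or_eq with hlt | heq
  · obtain ⟨a, has, hga, hjump⟩ := hg.1.exists_start_levelSet s
    have hs0a : s0 < a := lt_of_not_ge fun h => (hg.2.1 a h).not_gt (hga ▸ hlt)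
    have h_ge : g s ≤ (Ioc s0 s).sup' ⟨s, mem_Ioc.2 ⟨hs, le_rfl⟩⟩ fun a =>
        (Ici s).inf' ⟨s, mem_Ici.2 le_rfl⟩ fun b => blockAvg F U a b := by
      refine le_sup'_of_le _ (mem_Ioc.2 ⟨hs0a, has⟩) (le_inf' _ _ fun b hb => ?_)
      refine le_blockAvg_of_residual_nonneg hF (has.trans (mem_Ici.1 hb))
        (fun i hi => hga ▸ hg.1 (mem_Icc.1 hi).1) (sum_Icc_residual_nonneg hmin hg hjump ?_)
      exact fun i hi _ => hlt.trans_le (hga ▸ hg.1 (mem_Icc.1 hi).1)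
    rw [max_eq_right (hlt.le.trans h_ge)]
    exact le_antisymm h_ge h_le
  · rw [heq, max_eq_left h_le]

end Blocks

/-- constrained weighted isotonic regression with a pinned level `h0` at
position `s0` decouples. If `g` minimizes `∑ₛ Fₛ(Ūₛ - hₛ)²` over vectors with
`h₁ ≤ ⋯ ≤ h_{s0} ≤ h0 ≤ h_{s0+1} ≤ ⋯ ≤ h_S`, then for `s ≤ s0` the solution equals
`min(h0, ·)` of the max-min isotonic formula on the block `{1,…,s0}`, and for `s > s0` it
equals `max(h0, ·)` of the max-min isotonic formula on the block `{s0+1,…,S}`. -/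
theorem stmt8 (S : ℕ) (F U : Fin S → ℝ) (hF : ∀ s, 0 < F s)
    (h0 : ℝ) (s0 : Fin S) (g : Fin S → ℝ)
    (hmono : Monotone g)
    (hle : ∀ i, i ≤ s0 → g i ≤ h0)
    (hge : ∀ i, s0 < i → h0 ≤ g i)
    (hmin : ∀ g' : Fin S → ℝ, Monotone g' → (∀ i, i ≤ s0 → g' i ≤ h0) →
      (∀ i, s0 < i → h0 ≤ g' i) →
      ∑ s, F s * (U s - g s) ^ 2 ≤ ∑ s, F s * (U s - g' s) ^ 2) :
    (∀ s : Fin S, ∀ hs : s ≤ s0,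
      g s = min h0
        ((Finset.Iic s).sup' ⟨s, Finset.mem_Iic.2 le_rfl⟩ (fun a =>
          (Finset.Icc s s0).inf' ⟨s, Finset.mem_Icc.2 ⟨le_rfl, hs⟩⟩ (fun b =>
            (∑ i ∈ Finset.Icc a b, F i * U i) / (∑ i ∈ Finset.Icc a b, F i))))) ∧
    (∀ s : Fin S, ∀ hs : s0 < s,
      g s = max h0
        ((Finset.Ioc s0 s).sup' ⟨s, Finset.mem_Ioc.2 ⟨hs, le_rfl⟩⟩ (fun a =>
          (Finset.Ici s).inf' ⟨s, Finset.mem_Ici.2 le_rfl⟩ (fun b =>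
            (∑ i ∈ Finset.Icc a b, F i * U i) / (∑ i ∈ Finset.Icc a b, F i))))) := by
  have hg : g ∈ pinnedMonotone s0 h0 := ⟨hmono, hle, hge⟩
  have hg_min : IsMinOn (weightedSqError F U) (pinnedMonotone s0 h0) g :=
    isMinOn_iff.2 fun g' hg' => hmin g' hg'.1 hg'.2.1 hg'.2.2
  exact ⟨apply_eq_min_sup'_inf'_blockAvg hF hg_min hg, apply_eq_max_sup'_inf'_blockAvg hF hg_min hg⟩
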